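/- arXiv:math/0202272 — 3 statements merged into one kernel-verified Lean document; each statement's English description precedes it below -/
import Mathlib

section
/- For x ∈ ℂ with x^N ≠ 1 and x not an N-th root of unity, the function f(x, x/ω | ω) := ∑_{l=0}^{N-1} ω^l · ω(x|l)/ω(x/ω|l), where ω(y|l) = ∏_{j=1}^l 1/(1-yω^j), equals N x^{N-1} (1-x)/(1-x^N). -/
open Complex

/-!
Each summand telescopes: `ω(x|l)/ω(x/ω|l) = (1 - x)/(1 - x ω^l)`. Expanding
`(1 - x^N)/(1 - x ω^l) = ∑_{k<N} (x ω^l)^k` and summing over `l` first, the orthogonality of the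
powers of `ω` kills every `k` except `k = N - 1`, which leaves `N x^(N-1)/(1 - x^N)`.
-/

open Finset

section RootsOfUnity

variable {K : Type*} [Field K] {N : ℕ} {ζ x : K}

theorem IsPrimitiveRoot.geom_sum_pow_eq_zero (hζ : IsPrimitiveRoot ζ N) {m : ℕ} (hm₀ : m ≠ 0)
    (hmN : m < N) : ∑ l ∈ range N, (ζ ^ m) ^ l = 0 := by
  have hpow : (ζ ^ m) ^ N = 1 := by rw [← pow_mul, mul_comm, pow_mul, hζ.pow_eq_one, one_pow]
  rw [geom_sum_eq (hζ.pow_ne_one_of_pos_of_lt hm₀ hmN), hpow, sub_self, zero_div]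

theorem one_sub_mul_pow_ne_zero (hζ : ζ ^ N = 1) (hx : x ^ N ≠ 1) (l : ℕ) :
    1 - x * ζ ^ l ≠ 0 := by
  intro h
  apply hx
  rw [← one_pow N, sub_eq_zero.mp h, mul_pow, ← pow_mul, mul_comm l, pow_mul, hζ, one_pow,
    mul_one]

theorem prod_Icc_one_sub_div_prod_Icc_one_sub (hζ : ζ ≠ 0) (hx : ∀ j, 1 - x * ζ ^ j ≠ 0)
    (l : ℕ) :
    (∏ j ∈ Icc 1 l, (1 - x / ζ * ζ ^ j)) / ∏ j ∈ Icc 1 l, (1 - x * ζ ^ j) =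
      (1 - x) / (1 - x * ζ ^ l) := by
  induction l with
  | zero => simpa using (div_self (by simpa using hx 0)).symm
  | succ l ih =>
    have hshift : x / ζ * ζ ^ (l + 1) = x * ζ ^ l := by field_simp; ring
    rw [prod_Icc_succ_top (by omega), prod_Icc_succ_top (by omega), hshift, mul_div_mul_comm, ih]
    field_simp [hx l, hx (l + 1)]

theorem IsPrimitiveRoot.sum_pow_div_one_sub_mul_pow (hζ : IsPrimitiveRoot ζ N)
    (hx : x ^ N ≠ 1) :
    ∑ l ∈ range N, ζ ^ l / (1 - x * ζ ^ l) = N * x ^ (N - 1) / (1 - x ^ N) := by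
  obtain ⟨n, rfl⟩ : ∃ n, N = n + 1 :=
    Nat.exists_eq_add_one.mpr (Nat.pos_of_ne_zero fun h => hx (by rw [h, pow_zero]))
  have hne := one_sub_mul_pow_ne_zero hζ.pow_eq_one hx
  have hexpand (l : ℕ) : ζ ^ l / (1 - x * ζ ^ l) =
      (∑ k ∈ range (n + 1), x ^ k * (ζ ^ (k + 1)) ^ l) / (1 - x ^ (n + 1)) := by
    have hgeom := geom_sum_mul_neg (x * ζ ^ l) (n + 1)
    rw [mul_pow, ← pow_mul, mul_comm l, pow_mul, hζ.pow_eq_one, one_pow, mul_one] at hgeom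
    rw [div_eq_div_iff (hne l) (by rwa [sub_ne_zero, ne_comm]), ← hgeom, ← mul_assoc, mul_sum]
    congr 1
    exact sum_congr rfl fun k _ => by ring
  rw [sum_congr rfl fun l _ => hexpand l, ← sum_div, sum_comm]
  simp_rw [← mul_sum]
  rw [sum_range_succ, sum_eq_zero fun k hk =>
    by rw [hζ.geom_sum_pow_eq_zero k.succ_ne_zero (by simpa using mem_range.mp hk), mul_zero]]
  simp [hζ.pow_eq_one, mul_comm]

end RootsOfUnity

theorem stmt7_general (N : ℕ) (x : ℂ) (hx : x ^ N ≠ 1) :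
    (∑ l ∈ Finset.range N,
        Complex.exp (2 * Real.pi * Complex.I / N) ^ l *
          ((∏ j ∈ Finset.Icc 1 l,
              (1 - (x / Complex.exp (2 * Real.pi * Complex.I / N)) *
                Complex.exp (2 * Real.pi * Complex.I / N) ^ j)) /
            (∏ j ∈ Finset.Icc 1 l,
              (1 - x * Complex.exp (2 * Real.pi * Complex.I / N) ^ j)))) =
      (N : ℂ) * x ^ (N - 1) * (1 - x) / (1 - x ^ N) := by
  have hN : N ≠ 0 := by rintro rfl; exact hx (pow_zero x)
  set ω := Complex.exp (2 * Real.pi * Complex.I / N)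
  have hω : IsPrimitiveRoot ω N := Complex.isPrimitiveRoot_exp N hN
  have hne := one_sub_mul_pow_ne_zero hω.pow_eq_one hx
  calc _ = ∑ l ∈ range N, ω ^ l * ((1 - x) / (1 - x * ω ^ l)) := by
        refine sum_congr rfl fun l _ => ?_
        rw [prod_Icc_one_sub_div_prod_Icc_one_sub (Complex.exp_ne_zero _) hne]
    _ = (1 - x) * ∑ l ∈ range N, ω ^ l / (1 - x * ω ^ l) := by
        rw [mul_sum]
        exact sum_congr rfl fun l _ => by ring
    _ = _ := by rw [hω.sum_pow_div_one_sub_mul_pow hx]; ring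

/-- For `ω = exp(2πi/N)` and `x` with `x^N ≠ 1`,
`f(x, x/ω | ω) = ∑_{l=0}^{N-1} ω^l · ω(x|l)/ω(x/ω|l) = N x^{N-1}(1-x)/(1-x^N)`,
where `ω(y|l) = ∏_{j=1}^l (1-yω^j)⁻¹`. -/
theorem stmt7 (N : ℕ) (hN : 3 ≤ N) (hodd : Odd N) (x : ℂ) (hx : x ^ N ≠ 1) :
    (∑ l ∈ Finset.range N,
        Complex.exp (2 * Real.pi * Complex.I / N) ^ l *
          ((∏ j ∈ Finset.Icc 1 l,
              (1 - (x / Complex.exp (2 * Real.pi * Complex.I / N)) *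
                Complex.exp (2 * Real.pi * Complex.I / N) ^ j)) /
            (∏ j ∈ Finset.Icc 1 l,
              (1 - x * Complex.exp (2 * Real.pi * Complex.I / N) ^ j)))) =
      (N : ℂ) * x ^ (N - 1) * (1 - x) / (1 - x ^ N) :=
  stmt7_general N x hx
end

section
/- For x ∈ ℂ, x^N ≠ 1: ∑_{l=0}^{N-1} ω^l/(1 - x ω^l) = N x^{N-1}/(1 - x^N), where ω = exp(2πi/N). -/
/-!
Multiplying the `l`-th summand by `1 - x ^ N` turns it into the finite geometric sum
`∑_{k<N} x ^ k (ω ^ (k + 1)) ^ l`. Summing over `l` first, the orthogonality of the powers of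
`ω` kills every `k` except `k = N - 1`, which contributes `N x ^ (N - 1)`.
-/

open Finset

theorem div_one_sub_mul_eq_geom_sum_div {K : Type*} [Field K] {n : ℕ} {x y : K} (hx : x ^ n ≠ 1)
    (hy : y ^ n = 1) :
    y / (1 - x * y) = (∑ k ∈ range n, x ^ k * y ^ (k + 1)) / (1 - x ^ n) := by
  have hgeom : (1 - x * y) * ∑ k ∈ range n, (x * y) ^ k = 1 - x ^ n := by
    rw [mul_neg_geom_sum, mul_pow, hy, mul_one]
  have hne : 1 - x ^ n ≠ 0 := sub_ne_zero.2 (Ne.symm hx)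
  have hne' : 1 - x * y ≠ 0 := left_ne_zero_of_mul (hgeom ▸ hne)
  rw [eq_div_iff hne, ← hgeom, div_mul_eq_mul_div, mul_left_comm, mul_div_cancel_left₀ _ hne',
    mul_sum]
  exact sum_congr rfl fun k _ => by ring

theorem sum_range_pow_mul_ite_dvd_succ {R : Type*} [CommSemiring R] (n : ℕ) (x : R) :
    ∑ k ∈ range n, x ^ k * (if n ∣ k + 1 then (n : R) else 0) = n * x ^ (n - 1) := by
  cases n with
  | zero => simp
  | succ n =>
    rw [sum_range_succ, sum_eq_zero fun k hk => ?_]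
    · simp [mul_comm]
    · rw [if_neg (Nat.not_dvd_of_pos_of_lt k.succ_pos (by simpa using mem_range.1 hk)), mul_zero]

namespace IsPrimitiveRoot

theorem geom_sum_pow_eq_ite {R : Type*} [CommRing R] [IsDomain R] {ζ : R} {n : ℕ}
    (hζ : IsPrimitiveRoot ζ n) (m : ℕ) :
    ∑ l ∈ range n, (ζ ^ m) ^ l = if n ∣ m then (n : R) else 0 := by
  split_ifs with h
  · rw [(hζ.pow_eq_one_iff_dvd m).2 h, one_geom_sum]
  · have hne : ζ ^ m - 1 ≠ 0 := sub_ne_zero.2 fun h' => h ((hζ.pow_eq_one_iff_dvd m).1 h')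
    refine (mul_eq_zero.1 ?_).resolve_left hne
    rw [mul_geom_sum, pow_right_comm, hζ.pow_eq_one, one_pow, sub_self]

theorem sum_pow_div_one_sub_mul_pow_s8 {K : Type*} [Field K] {ζ : K} {n : ℕ}
    (hζ : IsPrimitiveRoot ζ n) {x : K} (hx : x ^ n ≠ 1) :
    ∑ l ∈ range n, ζ ^ l / (1 - x * ζ ^ l) = n * x ^ (n - 1) / (1 - x ^ n) := by
  calc ∑ l ∈ range n, ζ ^ l / (1 - x * ζ ^ l)
      = (∑ l ∈ range n, ∑ k ∈ range n, x ^ k * (ζ ^ (k + 1)) ^ l) / (1 - x ^ n) := by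
        rw [sum_div]
        refine sum_congr rfl fun l _ => ?_
        have hζl : (ζ ^ l) ^ n = 1 := by rw [pow_right_comm, hζ.pow_eq_one, one_pow]
        simp_rw [div_one_sub_mul_eq_geom_sum_div hx hζl, pow_right_comm ζ l]
    _ = (∑ k ∈ range n, x ^ k * ∑ l ∈ range n, (ζ ^ (k + 1)) ^ l) / (1 - x ^ n) := by
        simp only [mul_sum]
        rw [sum_comm]
    _ = n * x ^ (n - 1) / (1 - x ^ n) := by
        simp_rw [hζ.geom_sum_pow_eq_ite, sum_range_pow_mul_ite_dvd_succ]

end IsPrimitiveRoot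

theorem stmt8 (N : ℕ) (hN : 1 ≤ N) (x : ℂ) (hx : x ^ N ≠ 1) :
    (∑ l ∈ Finset.range N,
        Complex.exp (2 * Real.pi * Complex.I / N) ^ l /
          (1 - x * Complex.exp (2 * Real.pi * Complex.I / N) ^ l)) =
      (N : ℂ) * x ^ (N - 1) / (1 - x ^ N) :=
  (Complex.isPrimitiveRoot_exp N (Nat.one_le_iff_ne_zero.mp hN)).sum_pow_div_one_sub_mul_pow_s8 hx
end

section
/- Let ρ, μ be standard representations of W_N given by ρ(E)=a_ρ²Z, ρ(D)=a_ρ y_ρ X and similarly for μ, and let ρ⊗μ be defined via the comultiplication Δ(E)=E⊗E, Δ(D)=E⊗D+D⊗1. Then (ρ⊗μ)(E^N) = (a_ρ a_μ)^{2N}·Id and (ρ⊗μ)(D^N) = (a_ρ a_μ)^N (a_ρ^N y_μ^N + y_ρ^N/a_μ^N)·Id on ℂ^N ⊗ ℂ^N. -/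
/-!
The two terms `A = ρ(E) ⊗ μ(D)` and `B = ρ(D) ⊗ 1` of `(ρ ⊗ μ)(Δ D)` satisfy `A B = ω B A`,
because `Z X = ω X Z`. For `q`-commuting `A` and `B`, `(A + B)^n` expands in normally ordered
monomials with Gaussian binomial coefficients; at a primitive `n`-th root of unity all of them
vanish except the two extreme ones, so `(A + B)^N = A^N + B^N`, and both terms are scalars since
`Z^N = X^N = 1`.
-/

open Complex Matrix Kronecker

/-- The diagonal matrix `Z` with `Z_{ii} = ω^i`. -/
noncomputable def Zmat (N : ℕ) : Matrix (Fin N) (Fin N) ℂ :=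
  Matrix.diagonal fun i => Complex.exp (2 * Real.pi * Complex.I / N) ^ (i : ℕ)

/-- The cyclic shift matrix `X` with `X_{ij} = δ_{i, j+1 mod N}`. -/
def Xmat (N : ℕ) : Matrix (Fin N) (Fin N) ℂ :=
  Matrix.of fun i j => if (i : ℕ) = ((j : ℕ) + 1) % N then 1 else 0

open Finset

variable {K : Type*}

/-- The Gaussian binomial coefficient `[i + j choose i]_q`, indexed by the two exponents so that the
`q`-Pascal recursion involves no subtraction. -/
def qBinomial [CommSemiring K] (q : K) : ℕ → ℕ → K
  | 0, _ => 1
  | _ + 1, 0 => 1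
  | i + 1, j + 1 => qBinomial q (i + 1) j + q ^ (j + 1) * qBinomial q i (j + 1)

@[simp]
theorem qBinomial_zero_left [CommSemiring K] (q : K) (j : ℕ) : qBinomial q 0 j = 1 := by
  rw [qBinomial]

@[simp]
theorem qBinomial_zero_right [CommSemiring K] (q : K) (i : ℕ) : qBinomial q i 0 = 1 := by
  cases i <;> rw [qBinomial]

/-- The `q`-Pochhammer symbol `(q; q)_n`. -/
def qPochhammer [CommRing K] (q : K) (n : ℕ) : K := ∏ k ∈ range n, (1 - q ^ (k + 1))

theorem qPochhammer_succ [CommRing K] (q : K) (n : ℕ) :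
    qPochhammer q (n + 1) = qPochhammer q n * (1 - q ^ (n + 1)) :=
  prod_range_succ _ n

theorem qBinomial_mul_qPochhammer_mul_qPochhammer [CommRing K] (q : K) (i j : ℕ) :
    qBinomial q i j * qPochhammer q i * qPochhammer q j = qPochhammer q (i + j) := by
  induction i, j using qBinomial.induct with
  | case1 j => simp [qPochhammer]
  | case2 i => simp [qPochhammer]
  | case3 i j ih₁ ih₂ =>
    rw [qBinomial, qPochhammer_succ q i, qPochhammer_succ q j,
      show i + 1 + (j + 1) = i + j + 1 + 1 by ring, qPochhammer_succ q (i + j + 1)]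
    rw [qPochhammer_succ, show i + 1 + j = i + j + 1 by ring] at ih₁
    rw [qPochhammer_succ, show i + (j + 1) = i + j + 1 by ring] at ih₂
    linear_combination (1 - q ^ (j + 1)) * ih₁ + q ^ (j + 1) * (1 - q ^ (i + 1)) * ih₂

theorem qPochhammer_ne_zero [CommRing K] [IsDomain K] {q : K} {n m : ℕ}
    (hq : IsPrimitiveRoot q n) (hm : m < n) : qPochhammer q m ≠ 0 :=
  prod_ne_zero_iff.2 fun k hk => sub_ne_zero.2 <|
    (hq.pow_ne_one_of_pos_of_lt k.succ_ne_zero (by simp at hk; omega)).symm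

theorem qPochhammer_eq_zero [CommRing K] {q : K} {n : ℕ} (hq : q ^ n = 1) (hn : n ≠ 0) :
    qPochhammer q n = 0 :=
  prod_eq_zero (mem_range.2 (Nat.sub_one_lt hn))
    (by rw [Nat.sub_add_cancel (Nat.one_le_iff_ne_zero.2 hn), hq, sub_self])

theorem qBinomial_eq_zero [CommRing K] [IsDomain K] {q : K} {i j : ℕ}
    (hq : IsPrimitiveRoot q (i + j)) (hi : i ≠ 0) (hj : j ≠ 0) : qBinomial q i j = 0 := by
  have h := qBinomial_mul_qPochhammer_mul_qPochhammer q i j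
  rw [qPochhammer_eq_zero hq.pow_eq_one (by omega)] at h
  simpa [qPochhammer_ne_zero hq (show i < i + j by omega),
    qPochhammer_ne_zero hq (show j < i + j by omega)] using h

theorem sum_antidiagonal_succ_qBinomial_smul [CommSemiring K] {M : Type*} [AddCommMonoid M]
    [Module K M] (q : K) (F : ℕ → ℕ → M) (n : ℕ) :
    ∑ p ∈ antidiagonal (n + 1), qBinomial q p.1 p.2 • F p.1 p.2 =
      ∑ p ∈ antidiagonal n, qBinomial q p.1 p.2 • F p.1 (p.2 + 1) +
        ∑ p ∈ antidiagonal n, (q ^ p.2 * qBinomial q p.1 p.2) • F (p.1 + 1) p.2 := by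
  cases n with
  | zero => simp [Nat.sum_antidiagonal_succ]
  | succ m =>
    rw [Nat.sum_antidiagonal_succ, Nat.sum_antidiagonal_succ', Nat.sum_antidiagonal_succ,
      Nat.sum_antidiagonal_succ']
    simp only [qBinomial, add_smul, mul_smul, sum_add_distrib, pow_zero, one_mul]
    abel

section Algebra

variable [CommSemiring K] {R : Type*} [Semiring R] [Algebra K R] {q : K} {A B : R}

theorem pow_mul_eq_smul_mul_pow (h : A * B = q • (B * A)) (n : ℕ) :
    A ^ n * B = q ^ n • (B * A ^ n) := by
  induction n with
  | zero => simp
  | succ n ih =>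
    rw [pow_succ, mul_assoc, h, mul_smul_comm, ← mul_assoc, ih, smul_mul_assoc, smul_smul,
      mul_assoc, ← pow_succ, ← pow_succ']

theorem add_pow_eq_sum_qBinomial (h : A * B = q • (B * A)) (n : ℕ) :
    (A + B) ^ n = ∑ p ∈ antidiagonal n, qBinomial q p.1 p.2 • (B ^ p.1 * A ^ p.2) := by
  induction n with
  | zero => simp
  | succ n ih =>
    rw [sum_antidiagonal_succ_qBinomial_smul q fun i j => B ^ i * A ^ j, pow_succ, ih, mul_add,
      sum_mul, sum_mul]
    congr 1 <;> refine sum_congr rfl fun p _ => ?_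
    · rw [smul_mul_assoc, mul_assoc, ← pow_succ]
    · rw [smul_mul_assoc, mul_assoc, pow_mul_eq_smul_mul_pow h, mul_smul_comm, smul_smul,
        ← mul_assoc, ← pow_succ, mul_comm]

end Algebra

theorem add_pow_eq_of_isPrimitiveRoot [CommRing K] [IsDomain K] {R : Type*} [Ring R]
    [Algebra K R] {q : K} {A B : R} {N : ℕ} (hq : IsPrimitiveRoot q N) (hN : N ≠ 0)
    (h : A * B = q • (B * A)) : (A + B) ^ N = A ^ N + B ^ N := by
  rw [add_pow_eq_sum_qBinomial h, sum_eq_add_of_mem (0, N) (N, 0) (by simp) (by simp)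
    (by simp [hN]) fun p hp hne => ?_]
  · simp
  · rw [HasAntidiagonal.mem_antidiagonal] at hp
    rw [qBinomial_eq_zero (hp ▸ hq) (by grind) (by grind), zero_smul]

theorem kronecker_pow {m n α : Type*} [Fintype m] [Fintype n] [DecidableEq m] [DecidableEq n]
    [CommSemiring α] (A : Matrix m m α) (B : Matrix n n α) (k : ℕ) :
    (A ⊗ₖ B) ^ k = (A ^ k) ⊗ₖ (B ^ k) := by
  induction k with
  | zero => simp
  | succ k ih => rw [pow_succ, ih, ← mul_kronecker_mul, ← pow_succ, ← pow_succ]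

theorem Xmat_eq_permMatrixHom (N : ℕ) : Xmat N = permMatrixHom (R := ℂ) (finRotate N) := by
  ext i j
  cases N with
  | zero => exact i.elim0
  | succ n =>
    simp [Xmat, PEquiv.toMatrix_apply, sub_eq_iff_eq_add, Fin.ext_iff, Fin.val_add]

theorem Xmat_pow_card {N : ℕ} (hN : 2 ≤ N) : Xmat N ^ N = 1 := by
  have h := pow_orderOf_eq_one (finRotate N)
  rw [← Equiv.Perm.lcm_cycleType, cycleType_finRotate_of_le hN, Multiset.lcm_singleton,
    normalize_eq] at h
  rw [Xmat_eq_permMatrixHom, ← map_pow, h, map_one]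

theorem Zmat_pow_card {N : ℕ} (hN : N ≠ 0) : Zmat N ^ N = 1 := by
  have hω := (isPrimitiveRoot_exp N hN).pow_eq_one
  rw [Zmat, diagonal_pow, ← diagonal_one]
  congr 1
  funext i
  rw [Pi.pow_apply, ← pow_mul, mul_comm _ N, pow_mul, hω, one_pow]

theorem Zmat_mul_Xmat {N : ℕ} (hN : N ≠ 0) :
    Zmat N * Xmat N = Complex.exp (2 * Real.pi * Complex.I / N) • (Xmat N * Zmat N) := by
  ext i j
  rw [Zmat, diagonal_mul, Matrix.smul_apply, mul_diagonal, Xmat, of_apply]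
  split_ifs with h
  · rw [h, ← pow_eq_pow_mod _ (isPrimitiveRoot_exp N hN).pow_eq_one, pow_succ, smul_eq_mul]
    ring
  · simp

theorem stmt17_general (N : ℕ) (hN : 3 ≤ N)
    (aρ yρ aμ yμ : ℂ) (haμ : aμ ≠ 0) :
    ((aρ ^ 2 • Zmat N) ⊗ₖ (aμ ^ 2 • Zmat N)) ^ N = ((aρ * aμ) ^ (2 * N)) • 1 ∧
    ((aρ ^ 2 • Zmat N) ⊗ₖ ((aμ * yμ) • Xmat N) +
        ((aρ * yρ) • Xmat N) ⊗ₖ (1 : Matrix (Fin N) (Fin N) ℂ)) ^ N =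
      ((aρ * aμ) ^ N * (aρ ^ N * yμ ^ N + yρ ^ N / aμ ^ N)) • 1 := by
  have hN0 : N ≠ 0 := by omega
  set ω := Complex.exp (2 * Real.pi * Complex.I / N)
  refine ⟨?_, ?_⟩
  · rw [smul_kronecker, kronecker_smul, smul_smul, smul_pow, kronecker_pow, Zmat_pow_card hN0,
      one_kronecker_one]
    congr 1
    ring
  · have hZX : (aρ ^ 2 • Zmat N) * ((aρ * yρ) • Xmat N) =
        ω • (((aρ * yρ) • Xmat N) * (aρ ^ 2 • Zmat N)) := by
      rw [smul_mul_smul_comm, smul_mul_smul_comm, Zmat_mul_Xmat hN0, smul_comm, mul_comm (aρ ^ 2)]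
    have hcomm : ((aρ ^ 2 • Zmat N) ⊗ₖ ((aμ * yμ) • Xmat N)) * (((aρ * yρ) • Xmat N) ⊗ₖ 1) =
        ω • ((((aρ * yρ) • Xmat N) ⊗ₖ 1) * ((aρ ^ 2 • Zmat N) ⊗ₖ ((aμ * yμ) • Xmat N))) := by
      rw [← mul_kronecker_mul, ← mul_kronecker_mul, hZX, mul_one, one_mul, smul_kronecker]
    rw [add_pow_eq_of_isPrimitiveRoot (isPrimitiveRoot_exp N hN0) hN0 hcomm, kronecker_pow,
      kronecker_pow, smul_pow, smul_pow, smul_pow, Zmat_pow_card hN0, Xmat_pow_card (by omega),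
      one_pow, smul_kronecker, kronecker_smul, smul_kronecker, one_kronecker_one,
      smul_smul, ← add_smul]
    congr 1
    field_simp
    ring

/-- For standard representations `ρ(E) = aρ²Z, ρ(D) = aρ yρ X` (and similarly for `μ`),
the tensor product via `Δ(E) = E⊗E`, `Δ(D) = E⊗D + D⊗1` satisfies
`(ρ⊗μ)(E^N) = (aρaμ)^{2N}·Id` and
`(ρ⊗μ)(D^N) = (aρaμ)^N (aρ^N yμ^N + yρ^N/aμ^N)·Id`. -/
theorem stmt17 (N : ℕ) (hN : 3 ≤ N) (hodd : Odd N)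
    (aρ yρ aμ yμ : ℂ) (haρ : aρ ≠ 0) (hyρ : yρ ≠ 0) (haμ : aμ ≠ 0) (hyμ : yμ ≠ 0) :
    ((aρ ^ 2 • Zmat N) ⊗ₖ (aμ ^ 2 • Zmat N)) ^ N = ((aρ * aμ) ^ (2 * N)) • 1 ∧
    ((aρ ^ 2 • Zmat N) ⊗ₖ ((aμ * yμ) • Xmat N) +
        ((aρ * yρ) • Xmat N) ⊗ₖ (1 : Matrix (Fin N) (Fin N) ℂ)) ^ N =
      ((aρ * aμ) ^ N * (aρ ^ N * yμ ^ N + yρ ^ N / aμ ^ N)) • 1 :=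
  stmt17_general N hN aρ yρ aμ yμ haμ
end
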